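/- Let A be a finite or countable abelian group with Pontryagin dual Y = Â carrying Haar probability measure, let G be a countable group acting on (X,μ) = (Y^G, product measure) by the Bernoulli shift, and let ι be the embedding of N = ⊕_G A into the unitary multiplication operators on L²(X,μ,H) given by Pontryagin duality. If π is a quasirepresentation of G on L²(X,μ,H) fibered over the Bernoulli action, then the map π' on A ≀ G defined by π'(gh) = π(g) ι(h) for g ∈ G, h ∈ N is a quasirepresentation of A ≀ G satisfying: (1) π' restricted to N coincides with ι; (2) df(π') = df(π); (3) π' is unitary whenever π is unitary; (4) π' is uniformly bounded with the same constant whenever π is; (5) if π₁, π₂ are two such fibered quasirepresentations of G with extensions π'₁, π'₂, then ‖π'₁ − π'₂‖ = ‖π₁ − π₂‖. -/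

import Mathlib

noncomputable section

open scoped ENNReal
open MeasureTheory

/-! ## Amenability via invariant means -/

/-- A left-invariant mean on the bounded (continuous) real-valued functions on a
(discrete) group `G`: a positive normalized linear functional invariant under left
translations. -/
structure InvariantMean (G : Type*) [Group G] [TopologicalSpace G] [DiscreteTopology G] where
  lin : (BoundedContinuousFunction G ℝ) →ₗ[ℝ] ℝ
  nonneg : ∀ f : BoundedContinuousFunction G ℝ, (∀ x, 0 ≤ f x) → 0 ≤ lin f
  normalized : lin 1 = 1
  invariant : ∀ (g : G) (f : BoundedContinuousFunction G ℝ),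
    lin (f.compContinuous ⟨fun x => g * x, continuous_of_discreteTopology⟩) = lin f

/-- A group is amenable if there is a left-invariant mean on its bounded functions. -/
def IsAmenable (G : Type*) [Group G] : Prop :=
  letI : TopologicalSpace G := ⊥
  letI : DiscreteTopology G := ⟨rfl⟩
  Nonempty (InvariantMean G)

/-! ## Representations of groups on Hilbert spaces, unitarizability -/

section Reps

variable {G : Type*} [Group G] {H : Type*} [NormedAddCommGroup H] [InnerProductSpace ℂ H]

/-- A representation (homomorphism into bounded invertible operators) is uniformly
bounded if the operator norms of its values are bounded. -/
def UniformlyBoundedRep (π : G →* (H →L[ℂ] H)ˣ) : Prop :=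
  ∃ K : ℝ, ∀ g : G, ‖(π g : H →L[ℂ] H)‖ ≤ K

/-- A representation is unitarizable if some bounded invertible operator conjugates it
into a unitary representation. -/
def UnitarizableRep [CompleteSpace H] (π : G →* (H →L[ℂ] H)ˣ) : Prop :=
  ∃ S : (H →L[ℂ] H)ˣ, ∀ g : G,
    ((S * π g * S⁻¹ : (H →L[ℂ] H)ˣ) : H →L[ℂ] H) ∈ unitary (H →L[ℂ] H)

end Reps

/-- A group is unitarizable if every uniformly bounded representation of it on a complex
Hilbert space is unitarizable. -/
def UnitarizableGroup (G : Type*) [Group G] : Prop :=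
  ∀ (H : Type) (_ : NormedAddCommGroup H) (_ : InnerProductSpace ℂ H) (_ : CompleteSpace H)
    (π : G →* (H →L[ℂ] H)ˣ), UniformlyBoundedRep π → UnitarizableRep π

/-! ## Restricted wreath products -/

/-- The restricted direct product `⊕_G A`: functions `G → A` with finite support,
as a subgroup of the full product. -/
def restrictedProduct (G A : Type*) [Group A] : Subgroup (G → A) where
  carrier := {f | (Function.mulSupport f).Finite}
  one_mem' := by
    show (Function.mulSupport (1 : G → A)).Finite
    simp [Function.mulSupport_one]
  mul_mem' := by
    intro f g hf hg
    exact ((hf.union hg).subset (Function.mulSupport_mul f g))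
  inv_mem' := by
    intro f hf
    simpa [Function.mulSupport_inv] using hf

/-- The shift automorphism of `⊕_G A` induced by right translation by `g`. -/
def shiftAut {G A : Type*} [Group G] [Group A] (g : G) :
    restrictedProduct G A ≃* restrictedProduct G A where
  toFun f := ⟨fun x => (f : G → A) (x * g), by
    show ((fun x : G => x * g) ⁻¹' Function.mulSupport (f : G → A)).Finite
    exact f.2.preimage ((mul_left_injective g).injOn)⟩
  invFun f := ⟨fun x => (f : G → A) (x * g⁻¹), by
    show ((fun x : G => x * g⁻¹) ⁻¹' Function.mulSupport (f : G → A)).Finite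
    exact f.2.preimage ((mul_left_injective g⁻¹).injOn)⟩
  left_inv f := by
    ext x; simp
  right_inv f := by
    ext x; simp
  map_mul' f₁ f₂ := rfl

/-- The shift action of `G` on `⊕_G A` as a homomorphism into the automorphism group. -/
def shiftHom (A G : Type*) [Group A] [Group G] : G →* MulAut (restrictedProduct G A) where
  toFun := shiftAut
  map_one' := by
    refine MulEquiv.ext fun f => Subtype.ext (funext fun x => ?_)
    simp [shiftAut]
  map_mul' g h := by
    refine MulEquiv.ext fun f => Subtype.ext (funext fun x => ?_)
    simp [shiftAut, mul_assoc]

/-- The restricted wreath product `A ≀ G = (⊕_G A) ⋊ G`. -/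
abbrev WreathProduct (A G : Type*) [Group A] [Group G] :=
  SemidirectProduct (restrictedProduct G A) G (shiftHom A G)

end
noncomputable section

/-! ## Quasi-representations, Ulam stability, strong rigidity (group level) -/

section UlamGroup

variable {G : Type*} [Group G] {H : Type*} [NormedAddCommGroup H] [InnerProductSpace ℂ H]
  [CompleteSpace H]

/-- A unitary `δ`-representation of a group: a unital map into the unitary operators whose
multiplicativity defect is `< δ` in operator norm. -/
def IsUnitaryQuasiRep (δ : ℝ) (ρ : G → (H →L[ℂ] H)) : Prop :=
  ρ 1 = 1 ∧ (∀ g : G, ρ g ∈ unitary (H →L[ℂ] H)) ∧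
    ∀ g h : G, ‖ρ g * ρ h - ρ (g * h)‖ < δ

/-- A unitary representation `ρ` is strongly rigid if every unitary representation uniformly
close to it is conjugate to it by a unitary close to the identity. -/
def IsStronglyRigid (ρ : G →* unitary (H →L[ℂ] H)) : Prop :=
  ∀ ε > (0 : ℝ), ∃ δ > (0 : ℝ), ∀ ρ₁ : G →* unitary (H →L[ℂ] H),
    (∀ g : G, ‖(ρ g : H →L[ℂ] H) - (ρ₁ g : H →L[ℂ] H)‖ < δ) →
      ∃ U : unitary (H →L[ℂ] H),
        (∀ g : G, (ρ₁ g : H →L[ℂ] H) =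
          (U : H →L[ℂ] H) * (ρ g : H →L[ℂ] H) * ((U⁻¹ : unitary (H →L[ℂ] H)) : H →L[ℂ] H)) ∧
        ‖(U : H →L[ℂ] H) - 1‖ < ε

end UlamGroup

/-- A group is strongly Ulam stable if unitary quasi-representations with small defect are
uniformly close to genuine unitary representations, on every complex Hilbert space. -/
def StronglyUlamStable (G : Type*) [Group G] : Prop :=
  ∀ ε > (0 : ℝ), ∃ δ > (0 : ℝ), ∀ (H : Type) (_ : NormedAddCommGroup H)
    (_ : InnerProductSpace ℂ H) (_ : CompleteSpace H) (ρ : G → (H →L[ℂ] H)),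
    IsUnitaryQuasiRep δ ρ →
      ∃ ρ₁ : G →* unitary (H →L[ℂ] H), ∀ g : G, ‖ρ g - (ρ₁ g : H →L[ℂ] H)‖ < ε

/-- A bundled unitary representation of `G` on some complex Hilbert space. -/
structure UnitaryRep (G : Type*) [Group G] where
  carrier : Type
  [normed : NormedAddCommGroup carrier]
  [ips : InnerProductSpace ℂ carrier]
  [complete : CompleteSpace carrier]
  hom : G →* unitary (carrier →L[ℂ] carrier)

attribute [instance] UnitaryRep.normed UnitaryRep.ips UnitaryRep.complete

/-- `G` has a unitary representation that is not strongly rigid. -/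
def HasNonStronglyRigidRep (G : Type*) [Group G] : Prop :=
  ∃ r : UnitaryRep G, ¬ IsStronglyRigid r.hom

/-- The data witnessing extensional strong Ulam stability for a quasi-representation `ρ` of `G`
on `K` at precision `ε`: a Hilbert space `carrier` containing `K` (via the isometric embedding
`embed`), a unitary quasi-representation `ρ'` on `carrier` extending `ρ`, and a genuine unitary
representation `ρ₁` on `carrier` uniformly `ε`-close to `ρ'`. -/
structure UlamExtension (G : Type*) [Group G] (K : Type*) [NormedAddCommGroup K]
    [InnerProductSpace ℂ K] [CompleteSpace K] (ρ : G → (K →L[ℂ] K)) (ε : ℝ) where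
  carrier : Type
  [normed : NormedAddCommGroup carrier]
  [ips : InnerProductSpace ℂ carrier]
  [complete : CompleteSpace carrier]
  embed : K →ₗᵢ[ℂ] carrier
  ρ' : G → (carrier →L[ℂ] carrier)
  ρ'_one : ρ' 1 = 1
  ρ'_unitary : ∀ g : G, ρ' g ∈ unitary (carrier →L[ℂ] carrier)
  ρ'_extends : ∀ (g : G) (v : K), ρ' g (embed v) = embed (ρ g v)
  ρ₁ : G →* unitary (carrier →L[ℂ] carrier)
  close : ∀ g : G, ‖ρ' g - (ρ₁ g : carrier →L[ℂ] carrier)‖ < ε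

attribute [instance] UlamExtension.normed UlamExtension.ips UlamExtension.complete

/-- A group is extensionally strongly Ulam stable if every unitary quasi-representation with
small enough defect extends, on a larger Hilbert space, to a unitary quasi-representation that
is uniformly close to a genuine unitary representation. -/
def ExtensionallyStronglyUlamStable (G : Type*) [Group G] : Prop :=
  ∀ ε > (0 : ℝ), ∃ δ > (0 : ℝ), ∀ (K : Type) (_ : NormedAddCommGroup K)
    (_ : InnerProductSpace ℂ K) (_ : CompleteSpace K) (ρ : G → (K →L[ℂ] K)),
    IsUnitaryQuasiRep δ ρ → Nonempty (UlamExtension G K ρ ε)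

end
noncomputable section

namespace LampStability

/-! ## Countable measure-preserving equivalence relations -/

/-- A countable Borel measure-preserving equivalence relation on a measure space `(X, μ)`:
a Borel equivalence relation with (at most) countable classes such that every Borel partial
injection whose graph is contained in the relation preserves `μ`. -/
structure CountableMPRel (X : Type*) [MeasurableSpace X] (μ : MeasureTheory.Measure X) where
  rel : X → X → Prop
  equivalence : Equivalence rel
  measurableSet_rel : MeasurableSet {p : X × X | rel p.1 p.2}
  countable_classes : ∀ x : X, {y | rel x y}.Countable
  measure_preserving : ∀ (s : Set X) (f : X → X), MeasurableSet s → Measurable f →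
    Set.InjOn f s → (∀ x ∈ s, rel x (f x)) → μ (f '' s) = μ s

variable {X : Type*} [MeasurableSpace X] {μ : MeasureTheory.Measure X}

/-- Ergodicity: every invariant measurable set is null or conull. -/
def CountableMPRel.ErgodicRel (E : CountableMPRel X μ) : Prop :=
  ∀ s : Set X, MeasurableSet s → (∀ x ∈ s, ∀ y, E.rel x y → y ∈ s) →
    μ s = 0 ∨ μ sᶜ = 0

/-- `P` holds for almost every pair `(x, y) ∈ E`: it holds on all `E`-related pairs from a
conull subset of `X`. -/
def CountableMPRel.aePairs (E : CountableMPRel X μ) (P : X → X → Prop) : Prop :=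
  ∃ X' : Set X, μ X'ᶜ = 0 ∧ ∀ x ∈ X', ∀ y ∈ X', E.rel x y → P x y

/-- `P` holds for almost every composable triple of `E`. -/
def CountableMPRel.aeTriples (E : CountableMPRel X μ) (P : X → X → X → Prop) : Prop :=
  ∃ X' : Set X, μ X'ᶜ = 0 ∧ ∀ x ∈ X', ∀ y ∈ X', ∀ z ∈ X',
    E.rel x y → E.rel y z → P x y z

/-! ## Measure-preserving actions, essential freeness, orbital containment -/

/-- A measure-preserving action of a group `N` on `(X, μ)` by measurable maps. -/
structure MPAction (N X : Type*) [Group N] [MeasurableSpace X] (μ : MeasureTheory.Measure X) where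
  toFun : N → X → X
  measurable : ∀ n : N, Measurable (toFun n)
  one_apply : ∀ x : X, toFun 1 x = x
  mul_apply : ∀ (m n : N) (x : X), toFun (m * n) x = toFun m (toFun n x)
  measurePreserving : ∀ n : N, MeasureTheory.MeasurePreserving (toFun n) μ μ

/-- Essential freeness: every non-identity group element moves almost every point. -/
def MPAction.EssentiallyFree {N : Type*} [Group N] (a : MPAction N X μ) : Prop :=
  ∀ n : N, n ≠ 1 → ∀ᵐ x ∂μ, a.toFun n x ≠ x

/-- Ergodicity of an action: every strictly invariant measurable set is null or conull. -/
def MPAction.ErgodicAct {N : Type*} [Group N] (a : MPAction N X μ) : Prop :=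
  ∀ s : Set X, MeasurableSet s → (∀ n : N, a.toFun n ⁻¹' s = s) → μ s = 0 ∨ μ sᶜ = 0

/-- The orbits of the action `a` are almost everywhere contained in the classes of `E`. -/
def CountableMPRel.ContainsOrbits (E : CountableMPRel X μ) {N : Type*} [Group N]
    (a : MPAction N X μ) : Prop :=
  ∀ n : N, ∀ᵐ x ∂μ, E.rel x (a.toFun n x)

/-- `E` orbitally contains the countable group `N`: there is an essentially free
measure-preserving action of `N` on `(X, μ)` whose orbits are a.e. contained in `E`-classes. -/
def CountableMPRel.OrbitallyContains (E : CountableMPRel X μ) (N : Type*) [Group N] : Prop :=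
  ∃ a : MPAction N X μ, a.EssentiallyFree ∧ E.ContainsOrbits a

/-- Borel measurability of a map into a topological space, with respect to the Borel
σ-algebra on the codomain. -/
def BorelMeas {α β : Type*} [MeasurableSpace α] [TopologicalSpace β] (f : α → β) : Prop :=
  @Measurable α β _ (borel β) f

/-! ## Representations of equivalence relations -/

section RelReps

variable {H : Type*} [NormedAddCommGroup H] [InnerProductSpace ℂ H] [CompleteSpace H]

/-- A quasi-representation of a countable measure-preserving equivalence relation `E` on a
Hilbert space `H`: a Borel essentially uniformly bounded field of invertible operators indexed
by pairs, equal to the identity on the diagonal. (No cocycle identity is imposed.) -/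
structure RelQuasiRep (E : CountableMPRel X μ) (H : Type*) [NormedAddCommGroup H]
    [InnerProductSpace ℂ H] [CompleteSpace H] where
  η : X → X → (H →L[ℂ] H)ˣ
  measurable : ∀ v : H, BorelMeas fun p : X × X => ((η p.1 p.2 : H →L[ℂ] H) v)
  id_ae : ∀ᵐ x ∂μ, η x x = 1
  bounded : ∃ K : ℝ, E.aePairs fun x y => ‖(η x y : H →L[ℂ] H)‖ ≤ K

/-- The defect of a quasi-representation is at most `δ`. -/
def RelQuasiRep.DefectLe {E : CountableMPRel X μ} (q : RelQuasiRep E H) (δ : ℝ) : Prop :=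
  E.aeTriples fun x y z =>
    ‖((q.η y z * q.η x y : (H →L[ℂ] H)ˣ) : H →L[ℂ] H) - (q.η x z : H →L[ℂ] H)‖ ≤ δ

/-- The defect of a quasi-representation is smaller than `δ` (an `δ`-representation). -/
def RelQuasiRep.DefectLt {E : CountableMPRel X μ} (q : RelQuasiRep E H) (δ : ℝ) : Prop :=
  E.aeTriples fun x y z =>
    ‖((q.η y z * q.η x y : (H →L[ℂ] H)ˣ) : H →L[ℂ] H) - (q.η x z : H →L[ℂ] H)‖ < δ

/-- The essential supremum of the operator norms of a quasi-representation is at most `c`. -/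
def RelQuasiRep.NormLe {E : CountableMPRel X μ} (q : RelQuasiRep E H) (c : ℝ) : Prop :=
  E.aePairs fun x y => ‖(q.η x y : H →L[ℂ] H)‖ ≤ c

/-- A quasi-representation is unitary if almost all its operators are unitary. -/
def RelQuasiRep.IsUnitary {E : CountableMPRel X μ} (q : RelQuasiRep E H) : Prop :=
  E.aePairs fun x y => (q.η x y : H →L[ℂ] H) ∈ unitary (H →L[ℂ] H)

/-- A representation of `E`: a quasi-representation satisfying the cocycle identity on almost
every composable triple. -/
structure RelRep (E : CountableMPRel X μ) (H : Type*) [NormedAddCommGroup H]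
    [InnerProductSpace ℂ H] [CompleteSpace H] extends RelQuasiRep E H where
  cocycle : E.aeTriples fun x y z => η y z * η x y = η x z

/-- A representation of `E` is unitary if almost all its operators are unitary. -/
def RelRep.IsUnitary {E : CountableMPRel X μ} (r : RelRep E H) : Prop :=
  r.toRelQuasiRep.IsUnitary

/-- The (essential supremum) distance between two operator fields is `< c`. -/
def CountableMPRel.distLt (E : CountableMPRel X μ)
    (η₁ η₂ : X → X → (H →L[ℂ] H)ˣ) (c : ℝ) : Prop :=
  E.aePairs fun x y => ‖(η₁ x y : H →L[ℂ] H) - (η₂ x y : H →L[ℂ] H)‖ < c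

/-- The (essential supremum) distance between two operator fields is `≤ c`. -/
def CountableMPRel.distLe (E : CountableMPRel X μ)
    (η₁ η₂ : X → X → (H →L[ℂ] H)ˣ) (c : ℝ) : Prop :=
  E.aePairs fun x y => ‖(η₁ x y : H →L[ℂ] H) - (η₂ x y : H →L[ℂ] H)‖ ≤ c

/-- A measurable field of operators on `X`. -/
def MeasurableField (U : X → (H →L[ℂ] H)) : Prop :=
  ∀ v : H, BorelMeas fun x => U x v

/-- `η₁` is conjugated to `η₂` by the measurable field `(U_x)`:
`η₁(x,y) U_x = U_y η₂(x,y)` for a.e. pair. -/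
def CountableMPRel.ConjugatedBy (E : CountableMPRel X μ)
    (η₁ η₂ : X → X → (H →L[ℂ] H)ˣ) (U : X → (H →L[ℂ] H)) : Prop :=
  E.aePairs fun x y => (η₁ x y : H →L[ℂ] H) * U x = U y * (η₂ x y : H →L[ℂ] H)

/-- A unitary representation `r` of `E` is strongly rigid if every unitary representation
close to it is conjugated to it by a measurable field of unitaries uniformly close to the
identity almost everywhere. -/
def RelRep.IsStronglyRigid {E : CountableMPRel X μ} (r : RelRep E H) : Prop :=
  ∀ ε > (0 : ℝ), ∃ δ > (0 : ℝ), ∀ r₁ : RelRep E H, r₁.IsUnitary →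
    E.distLt r.η r₁.η δ →
      ∃ U : X → (H →L[ℂ] H), MeasurableField U ∧
        (∀ᵐ x ∂μ, U x ∈ unitary (H →L[ℂ] H) ∧ ‖1 - U x‖ < ε) ∧
        E.ConjugatedBy r₁.η r.η U

end RelReps

/-- An equivalence relation `E` is unitarizable if every representation of `E` on a Hilbert
space admits a measurable unitarizing field of invertible operators, essentially uniformly
bounded together with its inverses. -/
def CountableMPRel.Unitarizable (E : CountableMPRel X μ) : Prop :=
  ∀ (H : Type) (_ : NormedAddCommGroup H) (_ : InnerProductSpace ℂ H) (_ : CompleteSpace H)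
    (r : RelRep E H), ∃ B : X → (H →L[ℂ] H)ˣ,
      (∀ v : H, BorelMeas fun x => ((B x : H →L[ℂ] H) v)) ∧
      (∃ K : ℝ, ∀ᵐ x ∂μ, ‖(B x : H →L[ℂ] H)‖ ≤ K ∧
        ‖(((B x)⁻¹ : (H →L[ℂ] H)ˣ) : H →L[ℂ] H)‖ ≤ K) ∧
      E.aePairs fun x y =>
        star (r.η x y : H →L[ℂ] H) * (B y : H →L[ℂ] H) * (r.η x y : H →L[ℂ] H)
          = (B x : H →L[ℂ] H)

/-- An equivalence relation `E` is strongly Ulam stable if unitary quasi-representations of `E`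
with small enough defect are close to genuine unitary representations of `E` on the same space. -/
def CountableMPRel.StronglyUlamStableRel (E : CountableMPRel X μ) : Prop :=
  ∀ ε > (0 : ℝ), ∃ δ > (0 : ℝ), ∀ (H : Type) (_ : NormedAddCommGroup H)
    (_ : InnerProductSpace ℂ H) (_ : CompleteSpace H) (q : RelQuasiRep E H),
    q.IsUnitary → q.DefectLt δ →
      ∃ r : RelRep E H, r.IsUnitary ∧ E.distLt q.η r.η ε

/-- A bundled unitary representation of the relation `E` on some complex Hilbert space. -/
structure RelURep (E : CountableMPRel X μ) where
  carrier : Type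
  [normed : NormedAddCommGroup carrier]
  [ips : InnerProductSpace ℂ carrier]
  [complete : CompleteSpace carrier]
  rep : RelRep E carrier
  unitary' : rep.IsUnitary

attribute [instance] RelURep.normed RelURep.ips RelURep.complete

/-- `E` has a unitary representation that is not strongly rigid. -/
def CountableMPRel.HasNonStronglyRigidRep (E : CountableMPRel X μ) : Prop :=
  ∃ r : RelURep E, ¬ r.rep.IsStronglyRigid

end LampStability

end
noncomputable section

namespace LampStability

open scoped ENNReal

/-! ## Fibered Hilbert spaces `L²(X, μ, H)` and fibered operators -/

section Fibered

variable {X : Type*} [MeasurableSpace X] {μ : MeasureTheory.Measure X}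
variable {H : Type*} [NormedAddCommGroup H] [InnerProductSpace ℂ H] [CompleteSpace H]

/-- The projector `P_C` on `L²(X, μ, H)`: restriction (multiplication by the indicator
function) to a measurable set `C`. -/
def projC {C : Set X} (hC : MeasurableSet C) (f : MeasureTheory.Lp H 2 μ) :
    MeasureTheory.Lp H 2 μ :=
  (((MeasureTheory.Lp.memLp f).indicator hC).toLp (C.indicator f))

/-- A bounded operator on `L²(X, μ, H)` is totally fibered if it commutes with all the
projectors `P_C`, `C ⊆ X` measurable. -/
def TotallyFibered (B : MeasureTheory.Lp H 2 μ →L[ℂ] MeasureTheory.Lp H 2 μ) : Prop :=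
  ∀ (C : Set X) (hC : MeasurableSet C) (f : MeasureTheory.Lp H 2 μ),
    B (projC hC f) = projC hC (B f)

/-- `(Bx)` is an explicit fibered form of the operator `B` on `L²(X, μ, H)`: a measurable
field of operators on `H` with essentially bounded norms acting fiberwise as `B` does. -/
def ExplicitFiberedForm (B : MeasureTheory.Lp H 2 μ →L[ℂ] MeasureTheory.Lp H 2 μ)
    (Bx : X → (H →L[ℂ] H)) : Prop :=
  (∀ v : H, BorelMeas fun x => Bx x v) ∧
  essSup (fun x => (‖Bx x‖₊ : ℝ≥0∞)) μ < ⊤ ∧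
  ∀ f : MeasureTheory.Lp H 2 μ, (B f : X → H) =ᵐ[μ] fun x => Bx x (f x)

/-- The (generalized) Koopman operator on `L²(X, μ, H)` associated with a measure-preserving
automorphism `T` of `(X, μ)`: `(U_T f)(x) = f (T⁻¹ x)`. -/
def koopman (T : X ≃ᵐ X) (hT : MeasureTheory.MeasurePreserving T μ μ)
    (f : MeasureTheory.Lp H 2 μ) : MeasureTheory.Lp H 2 μ :=
  MeasureTheory.Lp.compMeasurePreserving (T.symm : X → X)
    (MeasureTheory.MeasurePreserving.symm T hT) f

/-- An operator `Q` on `L²(X, μ, H)` is skew-fibered over a measure-preserving automorphism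
`T` if it is the composition of the Koopman operator of `T` and a totally fibered operator. -/
def SkewFibered (Q : MeasureTheory.Lp H 2 μ →L[ℂ] MeasureTheory.Lp H 2 μ)
    (T : X ≃ᵐ X) (hT : MeasureTheory.MeasurePreserving T μ μ) : Prop :=
  ∃ B : MeasureTheory.Lp H 2 μ →L[ℂ] MeasureTheory.Lp H 2 μ,
    TotallyFibered B ∧ ∀ f : MeasureTheory.Lp H 2 μ, Q f = koopman T hT (B f)

/-! ## Bounded measurable functions and multiplication operators -/

end Fibered

/-- A bounded measurable complex-valued function on `X` (a representative of an element
of `L^∞(X, μ)`). -/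
structure BddMeasFun (X : Type*) [MeasurableSpace X] where
  toFun : X → ℂ
  measurable : Measurable toFun
  bound : ℝ
  le_bound : ∀ x : X, ‖toFun x‖ ≤ bound

section Fibered2

variable {X : Type*} [MeasurableSpace X] {μ : MeasureTheory.Measure X}
variable {H : Type*} [NormedAddCommGroup H] [InnerProductSpace ℂ H] [CompleteSpace H]

/-- The multiplication operator `M_ψ` on `L²(X, μ, H)` given by a bounded measurable
function `ψ`. -/
def mulOp (ψ : BddMeasFun X) (f : MeasureTheory.Lp H 2 μ) : MeasureTheory.Lp H 2 μ :=
  (MeasureTheory.MemLp.smul (p := ⊤) (r := 2) (MeasureTheory.Lp.memLp f)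
    (MeasureTheory.memLp_top_of_bound ψ.measurable.aestronglyMeasurable ψ.bound
      (Filter.Eventually.of_forall ψ.le_bound))).toLp (ψ.toFun • (f : X → H))

/-- Composition of a bounded measurable function with a measurable map. -/
def BddMeasFun.compMap (ψ : BddMeasFun X) (T : X → X) (hT : Measurable T) : BddMeasFun X :=
  ⟨fun x => ψ.toFun (T x), ψ.measurable.comp hT, ψ.bound, fun _ => ψ.le_bound _⟩

/-- A set `S` of bounded measurable functions is weakly spanning in `L^∞(X, μ)` (its linear
span is dense in the weak-* topology): equivalently, `S` separates `L¹(X, μ)`. -/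
def WeaklySpanning (μ : MeasureTheory.Measure X) (S : Set (BddMeasFun X)) : Prop :=
  ∀ f : X → ℂ, MeasureTheory.Integrable f μ →
    (∀ ψ ∈ S, ∫ x, ψ.toFun x * f x ∂μ = 0) → f =ᵐ[μ] 0

/-! ## Fibered (quasi-)representations of group actions -/

variable {N : Type*} [Group N]

/-- A quasi-representation of the action `a : N ↷ (X, μ)` fibered over the action, with fiber
the Hilbert space `H`: a measurable, essentially uniformly bounded field of invertible
operators `op g x`, with `op 1 x = Id` a.e. -/
structure FiberedQuasiRep (a : MPAction N X μ) (H : Type*) [NormedAddCommGroup H]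
    [InnerProductSpace ℂ H] [CompleteSpace H] where
  op : N → X → (H →L[ℂ] H)ˣ
  measurable : ∀ (g : N) (v : H), BorelMeas fun x => ((op g x : H →L[ℂ] H) v)
  one_ae : ∀ᵐ x ∂μ, op 1 x = 1
  bounded : ∃ K : ℝ, ∀ g : N, ∀ᵐ x ∂μ, ‖(op g x : H →L[ℂ] H)‖ ≤ K

/-- The cocycle identity: a fibered quasi-representation is a fibered representation. -/
def FiberedQuasiRep.IsRep {a : MPAction N X μ} {H : Type*} [NormedAddCommGroup H]
    [InnerProductSpace ℂ H] [CompleteSpace H] (q : FiberedQuasiRep a H) : Prop :=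
  ∀ g₁ g₂ : N, ∀ᵐ x ∂μ, q.op g₁ (a.toFun g₂ x) * q.op g₂ x = q.op (g₁ * g₂) x

/-- The family of operators `Φ` on `L²(X, μ, H)` is induced by the fibered
quasi-representation `q` over the action `a`: `(Φ g f)(g x) = q.op g x (f x)`. -/
def FiberedQuasiRep.Induces {a : MPAction N X μ} {H : Type*} [NormedAddCommGroup H]
    [InnerProductSpace ℂ H] [CompleteSpace H] (q : FiberedQuasiRep a H)
    (Φ : N → (MeasureTheory.Lp H 2 μ →L[ℂ] MeasureTheory.Lp H 2 μ)) : Prop :=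
  ∀ (g : N) (f : MeasureTheory.Lp H 2 μ), (Φ g f : X → H) =ᵐ[μ]
    fun y => (q.op g (a.toFun g⁻¹ y) : H →L[ℂ] H) (f (a.toFun g⁻¹ y))

/-- `B` is a unitarizing operator for the family of operators `Φ` on the Hilbert space `K`:
`Φ(g)* B Φ(g) = B` for all `g`, and `B` is bounded below as a quadratic form. -/
def IsUnitarizing {K : Type*} [NormedAddCommGroup K] [InnerProductSpace ℂ K]
    [CompleteSpace K] {N' : Type*} (Φ : N' → (K →L[ℂ] K)) (B : K →L[ℂ] K) : Prop :=
  (∀ g : N', star (Φ g) * B * Φ g = B) ∧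
  ∃ c > (0 : ℝ), ∀ v : K, c * ‖v‖ ^ 2 ≤ (inner ℂ (B v) v : ℂ).re

end Fibered2

/-! ## Orbit equivalence relations -/

variable {X : Type*} [MeasurableSpace X] {μ : MeasureTheory.Measure X}

/-- `E` is the orbit equivalence relation of the action `a`. -/
def CountableMPRel.IsOrbitRelOf (E : CountableMPRel X μ) {N : Type*} [Group N]
    (a : MPAction N X μ) : Prop :=
  ∀ x y : X, E.rel x y ↔ ∃ n : N, a.toFun n x = y

/-- The character of the Bernoulli space `X = Y^G` (`Y = Â` the Pontryagin dual of `A`)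
associated with an element of `⊕_G A` via Pontryagin duality. -/
def charOf {G A : Type*} [Group G] [CommGroup A] [TopologicalSpace A]
    (h : restrictedProduct G A) (t : G → PontryaginDual A) : ℂ :=
  ∏ᶠ g : G, (((t g) ((h : G → A) g) : Circle) : ℂ)

end LampStability

end

section CharLemmas
open LampStability MeasureTheory
variable {G A : Type*} [Group G] [CommGroup A] [TopologicalSpace A]

private lemma charOf_eq_coe (h : restrictedProduct G A) (t : G → PontryaginDual A) :
    charOf h t = ((∏ᶠ g : G, (t g) ((h : G → A) g) : Circle) : ℂ) :=
  (Circle.coeHom.map_finprod_of_injective Circle.coe_injective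
    (fun g => (t g) ((h : G → A) g))).symm

private lemma circleProd_mul (h₁ h₂ : restrictedProduct G A) (t : G → PontryaginDual A) :
    (∏ᶠ g : G, (t g) (((h₁ * h₂ : restrictedProduct G A) : G → A) g))
      = (∏ᶠ g : G, (t g) ((h₁ : G → A) g)) * ∏ᶠ g : G, (t g) ((h₂ : G → A) g) := by
  have fin : ∀ h : restrictedProduct G A,
      (Function.mulSupport fun g => (t g) ((h : G → A) g)).Finite := by
    intro h
    refine h.2.subset fun g hg => ?_
    simp only [Function.mem_mulSupport] at hg ⊢
    intro hone
    exact hg (by rw [hone, map_one])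
  rw [← finprod_mul_distrib (fin h₁) (fin h₂)]
  exact finprod_congr fun g => by
    show (t g) ((h₁ : G → A) g * (h₂ : G → A) g) = _
    rw [map_mul]

private lemma charOf_one' (t : G → PontryaginDual A) :
    charOf (1 : restrictedProduct G A) t = 1 := by
  rw [charOf_eq_coe]
  have : ∀ g : G, (t g) (((1 : restrictedProduct G A) : G → A) g) = 1 := fun g => by
    show (t g) 1 = 1
    exact map_one _
  rw [finprod_congr this, finprod_one, Circle.coe_one]

private lemma charOf_mul' (h₁ h₂ : restrictedProduct G A) (t : G → PontryaginDual A) :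
    charOf (h₁ * h₂) t = charOf h₁ t * charOf h₂ t := by
  rw [charOf_eq_coe, charOf_eq_coe, charOf_eq_coe, circleProd_mul, Circle.coe_mul]

private lemma charOf_inv' (h : restrictedProduct G A) (t : G → PontryaginDual A) :
    charOf h⁻¹ t = (starRingEnd ℂ) (charOf h t) := by
  rw [charOf_eq_coe, charOf_eq_coe]
  have : ∀ g : G, (t g) (((h⁻¹ : restrictedProduct G A) : G → A) g)
      = ((t g) ((h : G → A) g))⁻¹ := fun g => by
    show (t g) (((h : G → A) g)⁻¹) = _
    rw [map_inv]
  rw [finprod_congr this, finprod_inv_distrib, Circle.coe_inv_eq_conj]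

private lemma charOf_norm' (h : restrictedProduct G A) (t : G → PontryaginDual A) :
    ‖charOf h t‖ = 1 := by
  rw [charOf_eq_coe, Circle.norm_coe]

end CharLemmas
section ShiftLemmas
open LampStability
variable {G A : Type*} [Group G] [CommGroup A] [TopologicalSpace A]

private lemma shiftHom_apply_coe (g : G) (n : restrictedProduct G A) (x : G) :
    (((shiftHom A G g) n : restrictedProduct G A) : G → A) x = (n : G → A) (x * g) := rfl

private lemma charOf_shift' (hh : restrictedProduct G A) (g : G) (t : G → PontryaginDual A) :
    charOf hh (fun k => t (k * g⁻¹)) = charOf ((shiftHom A G g) hh) t := by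
  show (∏ᶠ k : G, (((t (k * g⁻¹)) ((hh : G → A) k) : Circle) : ℂ))
      = ∏ᶠ k : G, (((t k) (((((shiftHom A G g) hh) : restrictedProduct G A) : G → A) k) : Circle) : ℂ)
  rw [← finprod_comp_equiv (Equiv.mulRight g)
    (f := fun k => (((t (k * g⁻¹)) ((hh : G → A) k) : Circle) : ℂ))]
  refine finprod_congr fun j => ?_
  simp only [shiftHom_apply_coe, Equiv.coe_mulRight, mul_inv_cancel_right]

private lemma shift_inv_cancel (g : G) (n : restrictedProduct G A) :
    (shiftHom A G g) ((shiftHom A G g⁻¹) n) = n := by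
  refine Subtype.ext (funext fun x => ?_)
  show (n : G → A) (x * g * g⁻¹) = (n : G → A) x
  rw [mul_inv_cancel_right]

private lemma shift_grp (g₁ g₂ : G) (n₁ n₂ : restrictedProduct G A) :
    (shiftHom A G (g₁ * g₂)⁻¹) (n₁ * (shiftHom A G g₁) n₂)
      = (shiftHom A G g₂⁻¹) ((shiftHom A G g₁⁻¹) n₁) * (shiftHom A G g₂⁻¹) n₂ := by
  refine Subtype.ext (funext fun x => ?_)
  show (n₁ : G → A) (x * (g₁ * g₂)⁻¹) * (n₂ : G → A) (x * (g₁ * g₂)⁻¹ * g₁)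
      = (n₁ : G → A) (x * g₂⁻¹ * g₁⁻¹) * (n₂ : G → A) (x * g₂⁻¹)
  rw [mul_inv_rev, ← mul_assoc, mul_assoc (x * g₂⁻¹) g₁⁻¹ g₁, inv_mul_cancel, mul_one]

end ShiftLemmas
open LampStability in
/-- **Theorem (Statement 10).** Let `A` be a finite or countable abelian group with Pontryagin
dual `Y = Â` carrying Haar probability measure `ν`, let `G` act on `(X, μ) = (Y^G, ν^G)` by
the Bernoulli shift `a`, and let `ι` (here `iot`) be the embedding of `N = ⊕_G A` into the
multiplication operators on `L²(X, μ, H)` given by Pontryagin duality. If `Φ` is a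
quasi-representation of `G` on `L²(X, μ, H)` fibered over the Bernoulli action, then the map
`π'` on `A ≀ G` with `π'(g·h) = Φ(g) ι(h)` is a quasi-representation of `A ≀ G` such that:
(1) `π'` restricted to `N` coincides with `ι`; (2) `df(π') = df(Φ)`; (3) `π'` is unitary
whenever `Φ` is; (4) `π'` is uniformly bounded with the same constant whenever `Φ` is;
(5) the extension is isometric for the uniform distance between fibered quasi-representations. -/
theorem wreathProduct_quasiRep_extension
    (A : Type) [CommGroup A] [Countable A] [TopologicalSpace A] [DiscreteTopology A]
    [MeasurableSpace (PontryaginDual A)] [BorelSpace (PontryaginDual A)]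
    (ν : MeasureTheory.Measure (PontryaginDual A))
    [MeasureTheory.Measure.IsHaarMeasure ν] [MeasureTheory.IsProbabilityMeasure ν]
    (G : Type) [Group G] [Countable G]
    (μ : MeasureTheory.Measure (G → PontryaginDual A)) [MeasureTheory.IsProbabilityMeasure μ]
    (hμ : ∀ (s : Finset G) (t : G → Set (PontryaginDual A)),
      (∀ i : G, MeasurableSet (t i)) →
        μ {x | ∀ i ∈ s, x i ∈ t i} = ∏ i ∈ s, ν (t i))
    (a : MPAction G (G → PontryaginDual A) μ)
    (ha : ∀ (g : G) (t : G → PontryaginDual A) (h : G), a.toFun g t h = t (h * g))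
    (H : Type) [NormedAddCommGroup H] [InnerProductSpace ℂ H] [CompleteSpace H]
    [SecondCountableTopology H]
    (q : FiberedQuasiRep a H)
    (Φ : G → (MeasureTheory.Lp H 2 μ →L[ℂ] MeasureTheory.Lp H 2 μ))
    (hΦ : q.Induces Φ) (hΦ1 : Φ 1 = 1)
    (iot : restrictedProduct G A →
      (MeasureTheory.Lp H 2 μ →L[ℂ] MeasureTheory.Lp H 2 μ))
    (hiot : ∀ (h : restrictedProduct G A) (f : MeasureTheory.Lp H 2 μ),
      (iot h f : (G → PontryaginDual A) → H) =ᵐ[μ] fun t => charOf h t • f t) :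
    ∃ π' : WreathProduct A G → (MeasureTheory.Lp H 2 μ →L[ℂ] MeasureTheory.Lp H 2 μ),
      (∀ γ : WreathProduct A G,
        π' γ = Φ γ.right * iot ((shiftHom A G γ.right⁻¹) γ.left)) ∧
      (π' 1 = 1) ∧
      (∀ n : restrictedProduct G A, π' (SemidirectProduct.inl n) = iot n) ∧
      (∀ δ : ℝ, (∀ γ₁ γ₂ : WreathProduct A G, ‖π' γ₁ * π' γ₂ - π' (γ₁ * γ₂)‖ ≤ δ) ↔
        (∀ g₁ g₂ : G, ‖Φ g₁ * Φ g₂ - Φ (g₁ * g₂)‖ ≤ δ)) ∧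
      ((∀ g : G, Φ g ∈ unitary (MeasureTheory.Lp H 2 μ →L[ℂ] MeasureTheory.Lp H 2 μ)) →
        ∀ γ : WreathProduct A G,
          π' γ ∈ unitary (MeasureTheory.Lp H 2 μ →L[ℂ] MeasureTheory.Lp H 2 μ)) ∧
      (∀ K : ℝ, (∀ g : G, ‖Φ g‖ ≤ K) → ∀ γ : WreathProduct A G, ‖π' γ‖ ≤ K) ∧
      (∀ (q₂ : FiberedQuasiRep a H)
        (Φ₂ : G → (MeasureTheory.Lp H 2 μ →L[ℂ] MeasureTheory.Lp H 2 μ)),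
        q₂.Induces Φ₂ → ∀ c : ℝ,
          (∀ γ : WreathProduct A G,
            ‖π' γ - (Φ₂ γ.right * iot ((shiftHom A G γ.right⁻¹) γ.left))‖ ≤ c) ↔
          (∀ g : G, ‖Φ g - Φ₂ g‖ ≤ c)) := by
    classical
  -- basic lemmas about iot
  have hiot_one : iot 1 = 1 := by
    refine ContinuousLinearMap.ext fun f => ?_
    rw [ContinuousLinearMap.one_apply]
    refine MeasureTheory.Lp.ext ?_
    filter_upwards [hiot 1 f] with t ht
    rw [ht, charOf_one', one_smul]
  have hiot_mul : ∀ h₁ h₂ : restrictedProduct G A, iot h₁ * iot h₂ = iot (h₁ * h₂) := by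
    intro h₁ h₂
    refine ContinuousLinearMap.ext fun f => ?_
    rw [ContinuousLinearMap.mul_apply]
    refine MeasureTheory.Lp.ext ?_
    filter_upwards [hiot h₁ (iot h₂ f), hiot h₂ f, hiot (h₁ * h₂) f] with t e1 e2 e3
    rw [e1, e2, e3, charOf_mul', mul_smul]
  have hiot_norm : ∀ (hh : restrictedProduct G A) (f : MeasureTheory.Lp H 2 μ),
      ‖iot hh f‖ = ‖f‖ := by
    intro hh f
    rw [MeasureTheory.Lp.norm_def, MeasureTheory.Lp.norm_def]
    congr 1
    refine MeasureTheory.eLpNorm_congr_norm_ae ?_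
    filter_upwards [hiot hh f] with t ht
    rw [ht, norm_smul, charOf_norm', one_mul]
  have hiot_le : ∀ (T : MeasureTheory.Lp H 2 μ →L[ℂ] MeasureTheory.Lp H 2 μ)
      (hh : restrictedProduct G A), ‖T * iot hh‖ ≤ ‖T‖ := by
    intro T hh
    refine ContinuousLinearMap.opNorm_le_bound _ (norm_nonneg T) fun f => ?_
    rw [ContinuousLinearMap.mul_apply]
    calc ‖T (iot hh f)‖ ≤ ‖T‖ * ‖iot hh f‖ := T.le_opNorm _
    _ = ‖T‖ * ‖f‖ := by rw [hiot_norm]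
  have hmul_norm : ∀ (T : MeasureTheory.Lp H 2 μ →L[ℂ] MeasureTheory.Lp H 2 μ)
      (hh : restrictedProduct G A), ‖T * iot hh‖ = ‖T‖ := by
    intro T hh
    refine le_antisymm (hiot_le T hh) ?_
    have hT : T = T * iot hh * iot hh⁻¹ := by
      rw [mul_assoc, hiot_mul, mul_inv_cancel, hiot_one, mul_one]
    calc ‖T‖ = ‖T * iot hh * iot hh⁻¹‖ := by rw [← hT]
    _ ≤ ‖T * iot hh‖ := hiot_le _ _
  -- characters composed with the shift
  have hchar_shift : ∀ (hh : restrictedProduct G A) (g : G) (y : G → PontryaginDual A),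
      charOf hh (a.toFun g⁻¹ y) = charOf ((shiftHom A G g) hh) y := by
    intro hh g y
    have hy : a.toFun g⁻¹ y = fun k => y (k * g⁻¹) := funext fun k => ha g⁻¹ y k
    rw [hy, charOf_shift']
  -- intertwining relation
  have hintw : ∀ (g : G) (hh : restrictedProduct G A),
      Φ g * iot hh = iot ((shiftHom A G g) hh) * Φ g := by
    intro g hh
    refine ContinuousLinearMap.ext fun f => ?_
    rw [ContinuousLinearMap.mul_apply, ContinuousLinearMap.mul_apply]
    refine MeasureTheory.Lp.ext ?_
    have hq := (a.measurePreserving g⁻¹).quasiMeasurePreserving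
    have hcomp := hq.ae_eq_comp (hiot hh f)
    filter_upwards [hΦ g (iot hh f), hcomp, hiot ((shiftHom A G g) hh) (Φ g f), hΦ g f]
      with y e1 e2 e3 e4
    have e2' : (iot hh f) (a.toFun g⁻¹ y)
        = charOf hh (a.toFun g⁻¹ y) • f (a.toFun g⁻¹ y) := e2
    rw [e1, e3, e4, e2', map_smul, hchar_shift]
  -- iot is unitary
  have hstar : ∀ hh : restrictedProduct G A, star (iot hh) = iot hh⁻¹ := by
    intro hh
    rw [ContinuousLinearMap.star_eq_adjoint]
    symm
    rw [ContinuousLinearMap.eq_adjoint_iff]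
    intro f f'
    rw [MeasureTheory.L2.inner_def, MeasureTheory.L2.inner_def]
    refine MeasureTheory.integral_congr_ae ?_
    filter_upwards [hiot hh⁻¹ f, hiot hh f'] with t e1 e2
    rw [e1, e2, inner_smul_left, inner_smul_right, charOf_inv', Complex.conj_conj]
  have hiot_unitary : ∀ hh : restrictedProduct G A,
      iot hh ∈ unitary (MeasureTheory.Lp H 2 μ →L[ℂ] MeasureTheory.Lp H 2 μ) := by
    intro hh
    rw [Unitary.mem_iff]
    constructor
    · rw [hstar, hiot_mul, inv_mul_cancel, hiot_one]
    · rw [hstar, hiot_mul, mul_inv_cancel, hiot_one]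
  refine ⟨fun γ => Φ γ.right * iot ((shiftHom A G γ.right⁻¹) γ.left), fun γ => rfl,
    ?_, ?_, ?_, ?_, ?_, ?_⟩
  · -- π' 1 = 1
    show Φ (1 : WreathProduct A G).right
        * iot ((shiftHom A G (1 : WreathProduct A G).right⁻¹) (1 : WreathProduct A G).left) = 1
    rw [SemidirectProduct.one_right, SemidirectProduct.one_left, map_one, hiot_one, hΦ1, one_mul]
  · -- restriction to N is iot
    intro n
    show Φ (SemidirectProduct.inl n : WreathProduct A G).right
        * iot ((shiftHom A G (SemidirectProduct.inl n : WreathProduct A G).right⁻¹)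
          (SemidirectProduct.inl n : WreathProduct A G).left) = iot n
    rw [SemidirectProduct.right_inl, SemidirectProduct.left_inl, inv_one, map_one,
      MulAut.one_apply, hΦ1, one_mul]
  all_goals
    have hπinr : ∀ g : G,
        Φ (SemidirectProduct.inr g : WreathProduct A G).right
          * iot ((shiftHom A G (SemidirectProduct.inr g : WreathProduct A G).right⁻¹)
            (SemidirectProduct.inr g : WreathProduct A G).left) = Φ g := by
      intro g
      rw [SemidirectProduct.right_inr, SemidirectProduct.left_inr, map_one, hiot_one, mul_one]
    have hπmul : ∀ γ₁ γ₂ : WreathProduct A G,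
        (Φ γ₁.right * iot ((shiftHom A G γ₁.right⁻¹) γ₁.left))
          * (Φ γ₂.right * iot ((shiftHom A G γ₂.right⁻¹) γ₂.left))
        = (Φ γ₁.right * Φ γ₂.right)
          * iot ((shiftHom A G (γ₁ * γ₂).right⁻¹) ((γ₁ * γ₂).left)) := by
      intro γ₁ γ₂
      rw [SemidirectProduct.mul_right, SemidirectProduct.mul_left, shift_grp, ← hiot_mul]
      have hsw : iot ((shiftHom A G γ₁.right⁻¹) γ₁.left) * Φ γ₂.right
          = Φ γ₂.right * iot ((shiftHom A G γ₂.right⁻¹) ((shiftHom A G γ₁.right⁻¹) γ₁.left)) := by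
        have h := hintw γ₂.right ((shiftHom A G γ₂.right⁻¹) ((shiftHom A G γ₁.right⁻¹) γ₁.left))
        rw [shift_inv_cancel] at h
        exact h.symm
      calc (Φ γ₁.right * iot ((shiftHom A G γ₁.right⁻¹) γ₁.left))
            * (Φ γ₂.right * iot ((shiftHom A G γ₂.right⁻¹) γ₂.left))
          = Φ γ₁.right * ((iot ((shiftHom A G γ₁.right⁻¹) γ₁.left) * Φ γ₂.right)
            * iot ((shiftHom A G γ₂.right⁻¹) γ₂.left)) := by
            noncomm_ring
        _ = Φ γ₁.right * ((Φ γ₂.right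
              * iot ((shiftHom A G γ₂.right⁻¹) ((shiftHom A G γ₁.right⁻¹) γ₁.left)))
            * iot ((shiftHom A G γ₂.right⁻¹) γ₂.left)) := by rw [hsw]
        _ = _ := by noncomm_ring
    have hdiffnorm : ∀ γ₁ γ₂ : WreathProduct A G,
        ‖(Φ γ₁.right * iot ((shiftHom A G γ₁.right⁻¹) γ₁.left))
            * (Φ γ₂.right * iot ((shiftHom A G γ₂.right⁻¹) γ₂.left))
          - Φ (γ₁ * γ₂).right * iot ((shiftHom A G (γ₁ * γ₂).right⁻¹) ((γ₁ * γ₂).left))‖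
        = ‖Φ γ₁.right * Φ γ₂.right - Φ (γ₁.right * γ₂.right)‖ := by
      intro γ₁ γ₂
      rw [hπmul, SemidirectProduct.mul_right, ← sub_mul, hmul_norm]
    clear hπmul
  · -- defect equivalence
    intro δ
    constructor
    · intro hb g₁ g₂
      have h := hb (SemidirectProduct.inr g₁) (SemidirectProduct.inr g₂)
      beta_reduce at h
      rw [hπinr, hπinr, ← map_mul] at h
      rw [hπinr] at h
      exact h
    · intro hb γ₁ γ₂
      beta_reduce
      rw [hdiffnorm]
      exact hb _ _
  · -- unitarity
    intro hu γ
    exact mul_mem (hu γ.right) (hiot_unitary _)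
  · -- uniform bound
    intro K hK γ
    beta_reduce
    rw [hmul_norm]
    exact hK _
  · -- isometry of the extension
    intro q₂ Φ₂ hΦ₂ c
    constructor
    · intro hb g
      have h := hb (SemidirectProduct.inr g)
      beta_reduce at h
      rw [hπinr] at h
      rw [SemidirectProduct.right_inr, SemidirectProduct.left_inr, map_one, hiot_one,
        mul_one] at h
      exact h
    · intro hb γ
      beta_reduce
      rw [← sub_mul, hmul_norm]
      exact hb _
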